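/- arXiv:2604.19174 — 3 statements merged into one kernel-verified Lean document; each statement's English description precedes it below -/
import Mathlib

section
/- Every minimal non-sofic group G has a maximal normal subgroup M such that the quotient G/M is a finitely generated infinite simple group. -/
/-!
Soficity is a local property, so a group whose finitely generated subgroups are all proper and
sofic is itself sofic; hence a minimal non-sofic group `G` is finitely generated. Then `⊤` is a
compact element of the subgroup lattice and Zorn's lemma yields a maximal normal subgroup `M`,
so `G ⧸ M` is simple and finitely generated. Finally `M` is proper, hence sofic, and soficity
passes from a finite-index subgroup `H` to `G`: sofic approximations `θ` of `H` induce
approximations of `G` on `(G ⧸ H) × Fin n`, in the way a representation is induced. So `G ⧸ M`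
is infinite.
-/

/-- The normalized Hamming distance between two permutations of `Fin n`:
the number of points where they differ, divided by `n`. -/
noncomputable def permHammingDist {n : ℕ} (σ τ : Equiv.Perm (Fin n)) : ℝ :=
  ((Finset.univ.filter fun i => σ i ≠ τ i).card : ℝ) / n

/-- A group `G` is sofic if for every finite subset `F ⊆ G` and every `ε > 0` there exist
`n ≥ 1` and a map `θ` from `F` to `Sym(Fin n)` (extended to all of `G`) such that:
(i) `θ` is an `ε`-approximate homomorphism on `F`;
(ii) `θ` almost sends the identity to the identity;
(iii) distinct elements of `F` are sent to permutations at Hamming distance at least `1/4`. -/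
def IsSofic (G : Type*) [Group G] : Prop :=
  ∀ (F : Finset G) (ε : ℝ), 0 < ε →
    ∃ n : ℕ, 1 ≤ n ∧ ∃ θ : G → Equiv.Perm (Fin n),
      (∀ g h : G, g ∈ F → h ∈ F → g * h ∈ F →
        permHammingDist (θ g * θ h) (θ (g * h)) < ε) ∧
      ((1 : G) ∈ F → permHammingDist (θ 1) 1 < ε) ∧
      (∀ x y : G, x ∈ F → y ∈ F → x ≠ y → 1 / 4 ≤ permHammingDist (θ x) (θ y))

/-- A group is minimal non-sofic if it is not sofic but every proper subgroup is sofic. -/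
def IsMinimalNonSofic (G : Type*) [Group G] : Prop :=
  ¬ IsSofic G ∧ ∀ H : Subgroup G, H ≠ ⊤ → IsSofic H

/-- `M` is a maximal normal subgroup of `G`: a proper normal subgroup that is maximal
with respect to inclusion among proper normal subgroups. -/
def IsMaximalNormal {G : Type*} [Group G] (M : Subgroup G) : Prop :=
  M.Normal ∧ M ≠ ⊤ ∧ ∀ N : Subgroup G, N.Normal → N ≠ ⊤ → M ≤ N → N = M

open Equiv

section Hamming

variable {ι κ β : Type*} [Fintype ι] [Fintype κ] [DecidableEq β]

lemma hammingDist_comp_equiv (e : κ ≃ ι) (x y : ι → β) :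
    hammingDist (x ∘ e) (y ∘ e) = hammingDist x y :=
  Finset.card_equiv e (by simp)

lemma hammingDist_permCongr [DecidableEq ι] [DecidableEq κ] (e : ι ≃ κ) (σ τ : Perm ι) :
    hammingDist ⇑(e.permCongr σ) ⇑(e.permCongr τ) = hammingDist ⇑σ ⇑τ :=
  (hammingDist_comp (fun _ => e) (fun _ => e.injective)).trans
    (hammingDist_comp_equiv e.symm σ τ)

lemma hammingDist_eq_sum_fibers (x y : ι × κ → β) :
    hammingDist x y = ∑ i, hammingDist (fun k => x (i, k)) (fun k => y (i, k)) := by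
  simp only [hammingDist, Finset.card_filter]
  exact Fintype.sum_prod_type _

lemma permHammingDist_eq {n : ℕ} (σ τ : Perm (Fin n)) :
    permHammingDist σ τ = hammingDist ⇑σ ⇑τ / n := rfl

end Hamming

section Approx

variable {G : Type*} [Group G] {α : Type*} [Fintype α] [DecidableEq α]

/-- The clauses of `IsSofic` for a map into the permutations of an arbitrary finite type, with
the Hamming distances scaled by `card α` instead of normalized. -/
def IsSoficApprox (F : Finset G) (ε : ℝ) (θ : G → Perm α) : Prop :=
  (∀ g h, g ∈ F → h ∈ F → g * h ∈ F →
    (hammingDist ⇑(θ g * θ h) ⇑(θ (g * h)) : ℝ) < ε * Fintype.card α) ∧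
  ((1 : G) ∈ F → (hammingDist ⇑(θ 1) ⇑(1 : Perm α) : ℝ) < ε * Fintype.card α) ∧
  (∀ x y, x ∈ F → y ∈ F → x ≠ y → Fintype.card α ≤ 4 * hammingDist ⇑(θ x) ⇑(θ y))

lemma isSoficApprox_permCongr {β : Type*} [Fintype β] [DecidableEq β] (e : α ≃ β)
    {F : Finset G} {ε : ℝ} {θ : G → Perm α} (hθ : IsSoficApprox F ε θ) :
    IsSoficApprox F ε fun g => e.permCongr (θ g) := by
  obtain ⟨hmul, hone, hsep⟩ := hθ
  refine ⟨fun g h hg hh hgh => ?_, fun h1 => ?_, fun x y hx hy hxy => ?_⟩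
  · rw [← e.permCongr_mul, hammingDist_permCongr, ← Fintype.card_congr e]
    exact hmul g h hg hh hgh
  · rw [← map_one e.permCongrHom, Equiv.permCongrHom_coe, hammingDist_permCongr,
      ← Fintype.card_congr e]
    exact hone h1
  · rw [hammingDist_permCongr, ← Fintype.card_congr e]
    exact hsep x y hx hy hxy

lemma isSoficApprox_fin_iff {n : ℕ} (hn : 0 < n) {F : Finset G} {ε : ℝ}
    {θ : G → Perm (Fin n)} :
    IsSoficApprox F ε θ ↔
      (∀ g h, g ∈ F → h ∈ F → g * h ∈ F → permHammingDist (θ g * θ h) (θ (g * h)) < ε) ∧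
      ((1 : G) ∈ F → permHammingDist (θ 1) 1 < ε) ∧
      (∀ x y, x ∈ F → y ∈ F → x ≠ y → 1 / 4 ≤ permHammingDist (θ x) (θ y)) := by
  have hn' : (0 : ℝ) < n := by exact_mod_cast hn
  have hsep (d : ℕ) : n ≤ 4 * d ↔ 1 / 4 ≤ (d : ℝ) / n := by
    rw [le_div_iff₀ hn', ← Nat.cast_le (α := ℝ)]
    push_cast
    constructor <;> intro h <;> linarith
  simp only [IsSoficApprox, permHammingDist_eq, Fintype.card_fin, div_lt_iff₀ hn', hsep]

lemma IsSofic.exists_isSoficApprox (hG : IsSofic G) (F : Finset G) {ε : ℝ} (hε : 0 < ε) :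
    ∃ n, 0 < n ∧ ∃ θ : G → Perm (Fin n), IsSoficApprox F ε θ := by
  obtain ⟨n, hn, θ, hθ⟩ := hG F ε hε
  exact ⟨n, hn, θ, (isSoficApprox_fin_iff hn).2 hθ⟩

lemma isSofic_of_exists_isSoficApprox
    (h : ∀ (F : Finset G) (ε : ℝ), 0 < ε →
      ∃ (α : Type*) (_ : Fintype α) (_ : DecidableEq α) (_ : Nonempty α) (θ : G → Perm α),
        IsSoficApprox F ε θ) :
    IsSofic G := by
  intro F ε hε
  obtain ⟨α, _, _, _, θ, hθ⟩ := h F ε hε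
  exact ⟨_, Fintype.card_pos, _,
    (isSoficApprox_fin_iff Fintype.card_pos).1 (isSoficApprox_permCongr (Fintype.equivFin α) hθ)⟩

end Approx

section Sofic

variable {G : Type*} [Group G]

lemma isSoficApprox_toPerm [Fintype G] [DecidableEq G] (F : Finset G) {ε : ℝ} (hε : 0 < ε) :
    IsSoficApprox F ε (MulAction.toPermHom G G) := by
  have hpos : (0 : ℝ) < ε * Fintype.card G := by positivity
  refine ⟨fun g h _ _ _ => ?_, fun _ => ?_, fun x y _ _ hxy => ?_⟩
  · rwa [← map_mul, hammingDist_self, Nat.cast_zero]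
  · rwa [map_one, hammingDist_self, Nat.cast_zero]
  · have : hammingDist ⇑(MulAction.toPerm x : Perm G) ⇑(MulAction.toPerm y) = Fintype.card G := by
      rw [hammingDist, Finset.filter_true_of_mem fun z _ => by simpa using hxy, Finset.card_univ]
    simp only [MulAction.toPermHom_apply, this]
    omega

lemma isSofic_of_finite [Finite G] : IsSofic G := by
  classical
  have := Fintype.ofFinite G
  exact isSofic_of_exists_isSoficApprox fun F ε hε =>
    ⟨G, inferInstance, inferInstance, ⟨1⟩, _, isSoficApprox_toPerm F hε⟩

lemma isSofic_of_forall_finset_subset_isSofic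
    (h : ∀ F : Finset G, ∃ H : Subgroup G, (F : Set G) ⊆ H ∧ IsSofic H) : IsSofic G := by
  classical
  refine isSofic_of_exists_isSoficApprox fun F ε hε => ?_
  obtain ⟨H, hFH, hH⟩ := h F
  obtain ⟨n, hn, θ, hmul, hone, hsep⟩ := hH.exists_isSoficApprox (F.subtype (· ∈ H)) hε
  have hF {g : G} (hg : g ∈ F) : (⟨g, hFH hg⟩ : H) ∈ F.subtype (· ∈ H) := Finset.mem_subtype.2 hg
  set θ' : G → Perm (Fin n) := fun g => if hg : g ∈ H then θ ⟨g, hg⟩ else 1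
  have hθ' {g : G} (hg : g ∈ F) : θ' g = θ ⟨g, hFH hg⟩ := dif_pos _
  refine ⟨Fin n, inferInstance, inferInstance, ⟨⟨0, hn⟩⟩, θ',
    fun g h hg hh hgh => ?_, fun h1 => ?_, fun x y hx hy hxy => ?_⟩
  · rw [hθ' hg, hθ' hh, hθ' hgh]
    exact hmul _ _ (hF hg) (hF hh) (hF hgh)
  · rw [hθ' h1]
    exact hone (hF h1)
  · rw [hθ' hx, hθ' hy]
    exact hsep _ _ (hF hx) (hF hy) (by simpa using hxy)

end Sofic

section ProdShear

variable {Q α : Type*}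

lemma prodShear_mul (e e' : Perm Q) (π π' : Q → Perm α) :
    Equiv.prodShear e π * Equiv.prodShear e' π' =
      Equiv.prodShear (e * e') fun q => π (e' q) * π' q :=
  Equiv.ext fun _ => rfl

lemma one_eq_prodShear : (1 : Perm (Q × α)) = Equiv.prodShear 1 fun _ => 1 :=
  Equiv.ext fun _ => rfl

variable [Fintype Q] [Fintype α] [DecidableEq Q] [DecidableEq α]

lemma hammingDist_prodShear (e e' : Perm Q) (π π' : Q → Perm α) :
    hammingDist ⇑(Equiv.prodShear e π) ⇑(Equiv.prodShear e' π') =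
      ∑ q, if e q = e' q then hammingDist ⇑(π q) ⇑(π' q) else Fintype.card α := by
  rw [hammingDist_eq_sum_fibers]
  refine Finset.sum_congr rfl fun q _ => ?_
  split_ifs with hq
  · simp only [Equiv.prodShear_apply, hq]
    exact hammingDist_comp (fun _ => Prod.mk (e' q)) fun _ => Prod.mk_right_injective _
  · rw [hammingDist, Finset.filter_true_of_mem fun i _ => by simp [hq], Finset.card_univ]

end ProdShear

section Induced

variable {G : Type*} [Group G] (H : Subgroup G)

lemma out_smul_inv_mul_out_mem (q : G ⧸ H) (g : G) : (g • q).out⁻¹ * g * q.out ∈ H := by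
  rw [mul_assoc, ← QuotientGroup.eq, QuotientGroup.out_eq']
  exact congrArg (g • ·) (QuotientGroup.out_eq' q).symm

noncomputable def inducedCocycle (q : G ⧸ H) (g : G) : H :=
  ⟨(g • q).out⁻¹ * g * q.out, out_smul_inv_mul_out_mem H q g⟩

variable {H}

lemma inducedCocycle_mul (q : G ⧸ H) (g h : G) :
    inducedCocycle H (h • q) g * inducedCocycle H q h = inducedCocycle H q (g * h) := by
  ext
  simp only [inducedCocycle, Subgroup.coe_mul, mul_smul]
  group

lemma inducedCocycle_one (q : G ⧸ H) : inducedCocycle H q 1 = 1 := by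
  ext
  simp [inducedCocycle]

lemma eq_of_inducedCocycle_eq {q : G ⧸ H} {x y : G} (hxy : x • q = y • q)
    (h : inducedCocycle H q x = inducedCocycle H q y) : x = y := by
  simpa [inducedCocycle, hxy] using congrArg Subtype.val h

/-- Under the bijection `(q, k) ↦ q.out * k` of `(G ⧸ H) × H` with `G`, left multiplication by
`g` is `(q, k) ↦ (g • q, inducedCocycle H q g * k)`; here the action of `H` on itself is
replaced by `θ`. -/
noncomputable def inducedPerm {α : Type*} (θ : H → Perm α) (g : G) : Perm ((G ⧸ H) × α) :=
  Equiv.prodShear (MulAction.toPerm g) fun q => θ (inducedCocycle H q g)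

lemma isSoficApprox_inducedPerm [Fintype (G ⧸ H)] [DecidableEq (G ⧸ H)]
    {α : Type*} [Fintype α] [DecidableEq α] {F : Finset G} {F' : Finset H}
    (hmem : ∀ q {g}, g ∈ F → inducedCocycle H q g ∈ F') {ε : ℝ} {θ : H → Perm α}
    (hθ : IsSoficApprox F' ε θ) : IsSoficApprox F ε (inducedPerm θ) := by
  obtain ⟨hmul, hone, hsep⟩ := hθ
  have sum_lt (d : G ⧸ H → ℕ) (hd : ∀ q, (d q : ℝ) < ε * Fintype.card α) :
      ((∑ q, d q : ℕ) : ℝ) < ε * Fintype.card ((G ⧸ H) × α) := by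
    push_cast
    calc ∑ q, (d q : ℝ) < ∑ _q : G ⧸ H, ε * Fintype.card α :=
          Finset.sum_lt_sum_of_nonempty Finset.univ_nonempty fun q _ => hd q
      _ = ε * Fintype.card ((G ⧸ H) × α) := by
          simp only [Finset.sum_const, Finset.card_univ, Fintype.card_prod, nsmul_eq_mul]
          push_cast
          ring
  refine ⟨fun g h hg hh hgh => ?_, fun h1 => ?_, fun x y hx hy hxy => ?_⟩
  · rw [inducedPerm, inducedPerm, inducedPerm, prodShear_mul, hammingDist_prodShear]
    refine sum_lt _ fun q => ?_
    simp only [Perm.mul_apply, MulAction.toPerm_apply, ← mul_smul, if_true]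
    rw [← inducedCocycle_mul]
    exact hmul _ _ (hmem _ hg) (hmem _ hh) (inducedCocycle_mul q g h ▸ hmem q hgh)
  · rw [inducedPerm, one_eq_prodShear, hammingDist_prodShear]
    refine sum_lt _ fun q => ?_
    simp only [MulAction.toPerm_apply, one_smul, Perm.one_apply, if_true, inducedCocycle_one]
    exact hone (inducedCocycle_one q ▸ hmem q h1)
  · -- Over each coset `q`, either `x` and `y` send `q` to different cosets and the fibre is moved
    -- apart entirely, or they send it to the same one and their cocycles at `q` differ.
    rw [inducedPerm, inducedPerm, hammingDist_prodShear, Fintype.card_prod]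
    calc Fintype.card (G ⧸ H) * Fintype.card α
        = (Finset.univ : Finset (G ⧸ H)).card • Fintype.card α := by simp
      _ ≤ ∑ q, 4 * (if x • q = y • q then hammingDist ⇑(θ (inducedCocycle H q x))
            ⇑(θ (inducedCocycle H q y)) else Fintype.card α) :=
          Finset.card_nsmul_le_sum _ _ _ fun q _ => ?_
      _ = _ := by simp only [MulAction.toPerm_apply, Finset.mul_sum]
    split_ifs with hq
    · exact hsep _ _ (hmem q hx) (hmem q hy) fun h => hxy (eq_of_inducedCocycle_eq hq h)
    · omega

variable (H) in
lemma isSofic_of_finiteIndex [H.FiniteIndex] (hH : IsSofic H) : IsSofic G := by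
  classical
  have := Fintype.ofFinite (G ⧸ H)
  refine isSofic_of_exists_isSoficApprox fun F ε hε => ?_
  obtain ⟨n, hn, θ, hθ⟩ :=
    hH.exists_isSoficApprox (Finset.image₂ (inducedCocycle H) Finset.univ F) hε
  exact ⟨(G ⧸ H) × Fin n, inferInstance, inferInstance, ⟨((1 : G), ⟨0, hn⟩)⟩, inducedPerm θ,
    isSoficApprox_inducedPerm (fun q _ hg => Finset.mem_image₂_of_mem (Finset.mem_univ q) hg) hθ⟩

end Induced

section MaximalNormal

variable {G : Type*} [Group G]

lemma Subgroup.FG.isCompactElement {P : Subgroup G} (hP : P.FG) :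
    IsCompactElement P := by
  obtain ⟨S, rfl⟩ := hP
  rw [CompleteLattice.isCompactElement_iff_le_of_directed_sSup_le]
  intro s hne hdir hle
  have hS : (S : Set G) ⊆ ⋃ K ∈ s, (K : Set G) := fun x hx => by
    simpa using (Subgroup.mem_sSup_of_directedOn hne hdir).1 (Subgroup.closure_le _ |>.1 hle hx)
  obtain ⟨K, hK, hSK⟩ := hdir.exists_mem_subset_of_finset_subset_biUnion hne hS
  exact ⟨K, hK, Subgroup.closure_le K |>.2 hSK⟩

lemma Group.FG.exists_le_isMaximalNormal [Group.FG G] (N : Subgroup G) (hN : N.Normal)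
    (hNt : N ≠ ⊤) : ∃ M, N ≤ M ∧ IsMaximalNormal M := by
  have htop : IsCompactElement (⊤ : Subgroup G) := Group.FG.out.isCompactElement
  obtain ⟨M, hNM, hM⟩ := zorn_le_nonempty₀ {K : Subgroup G | K.Normal ∧ K ≠ ⊤}
    (fun c hc hchain K hK => ⟨sSup c,
      ⟨Subgroup.sSup_normal c fun K hK => (hc hK).1,
        (CompleteLattice.IsCompactElement.directed_sSup_lt_of_lt htop ⟨K, hK⟩ hchain.directedOn
          fun K hK => lt_top_iff_ne_top.2 (hc hK).2).ne⟩,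
      fun _ => le_sSup⟩) N ⟨hN, hNt⟩
  exact ⟨M, hNM, hM.prop.1, hM.prop.2, fun K hK hKt hMK => (hM.eq_of_le ⟨hK, hKt⟩ hMK).symm⟩

lemma IsMaximalNormal.isSimpleGroup_quotient {M : Subgroup G} [M.Normal]
    (hM : IsMaximalNormal M) : IsSimpleGroup (G ⧸ M) := by
  have : Nontrivial (G ⧸ M) := not_subsingleton_iff_nontrivial.1 fun h =>
    hM.2.1 (QuotientGroup.subgroup_eq_top_of_subsingleton M h)
  refine ⟨fun N hN => ?_⟩
  have hN' : (N.comap (QuotientGroup.mk' M)).map (QuotientGroup.mk' M) = N :=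
    Subgroup.map_comap_eq_self_of_surjective (QuotientGroup.mk'_surjective M) N
  by_cases htop : N.comap (QuotientGroup.mk' M) = ⊤
  · right
    rw [← hN', htop, Subgroup.map_top_of_surjective _ (QuotientGroup.mk'_surjective M)]
  · left
    rw [← hN', hM.2.2 _ (hN.comap _) htop (QuotientGroup.le_comap_mk' M N),
      QuotientGroup.map_mk'_self]

end MaximalNormal

/-- Every minimal non-sofic group has a maximal normal subgroup `M` such that `G/M`
is a finitely generated infinite simple group. -/
theorem minimalNonSofic_has_maximalNormal_simple_quotient (G : Type*) [Group G]
    (hG : IsMinimalNonSofic G) :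
    ∃ M : Subgroup G, ∃ _ : M.Normal, IsMaximalNormal M ∧
      Group.FG (G ⧸ M) ∧ Infinite (G ⧸ M) ∧ IsSimpleGroup (G ⧸ M) := by
  obtain ⟨hns, hmin⟩ := hG
  have hfg : Group.FG G := by
    by_contra hfg
    exact hns <| isSofic_of_forall_finset_subset_isSofic fun F =>
      ⟨_, Subgroup.subset_closure, hmin _ fun h => hfg ⟨⟨F, h⟩⟩⟩
  have : Nontrivial G := by
    by_contra h
    have := not_nontrivial_iff_subsingleton.1 h
    exact hns isSofic_of_finite
  obtain ⟨M, -, hM⟩ := hfg.exists_le_isMaximalNormal ⊥ inferInstance bot_ne_top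
  have := hM.1
  refine ⟨M, hM.1, hM, inferInstance, not_finite_iff_infinite.1 fun hfin => ?_,
    hM.isSimpleGroup_quotient⟩
  have := Subgroup.finiteIndex_of_finite_quotient (H := M)
  exact hns (isSofic_of_finiteIndex M (hmin M hM.2.1))
end

section
/- No minimal non-sofic group is locally graded; that is, if G is not sofic, every proper subgroup of G is sofic, and G is locally graded, then a contradiction follows. -/
/-- A group is locally graded if every nontrivial finitely generated subgroup has a
proper subgroup of finite index. -/
def IsLocallyGraded (G : Type*) [Group G] : Prop :=
  ∀ H : Subgroup G, H ≠ ⊥ → H.FG → ∃ K : Subgroup H, K ≠ ⊤ ∧ K.FiniteIndex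

open scoped Classical in
/-- Normalized Hamming distance for permutations of an arbitrary finite type. -/
noncomputable def pdist {α : Type*} [Fintype α] (σ τ : Equiv.Perm α) : ℝ :=
  ((Finset.univ.filter fun a => σ a ≠ τ a).card : ℝ) / (Fintype.card α)

theorem pdist_fin {n : ℕ} (σ τ : Equiv.Perm (Fin n)) : pdist σ τ = permHammingDist σ τ := by
  unfold pdist permHammingDist
  rw [Fintype.card_fin]
  rw [Finset.filter_congr_decidable]

open scoped Classical in
theorem permHammingDist_permCongr {α : Type*} [Fintype α] {N : ℕ} (e : α ≃ Fin N)
    (σ τ : Equiv.Perm α) :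
    permHammingDist (e.permCongr σ) (e.permCongr τ) = pdist σ τ := by
  unfold pdist permHammingDist
  have hN : (Fintype.card α : ℝ) = N := by exact_mod_cast Fintype.card_congr e ▸ Fintype.card_fin N
  rw [hN]
  congr 2
  have : (Finset.univ.filter fun i => e.permCongr σ i ≠ e.permCongr τ i)
      = (Finset.univ.filter fun a => σ a ≠ τ a).image e := by
    ext i
    simp only [Finset.mem_filter, Finset.mem_univ, true_and, Finset.mem_image,
      Equiv.permCongr_apply, ne_eq, EmbeddingLike.apply_eq_iff_eq]
    constructor
    · intro h; exact ⟨e.symm i, h, e.apply_symm_apply i⟩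
    · rintro ⟨a, ha, rfl⟩; simpa using ha
  rw [this, Finset.card_image_of_injective _ e.injective]

theorem permCongr_mul {α β : Type*} (e : α ≃ β) (σ τ : Equiv.Perm α) :
    e.permCongr (σ * τ) = e.permCongr σ * e.permCongr τ := by
  ext x; simp [Equiv.permCongr_apply, Equiv.Perm.mul_apply]

theorem permCongr_one {α β : Type*} (e : α ≃ β) : e.permCongr (1 : Equiv.Perm α) = 1 := by
  ext x; simp [Equiv.permCongr_apply]

theorem isSofic_of_subsingleton (G : Type*) [Group G] [Subsingleton G] : IsSofic G := by
  intro F ε hε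
  refine ⟨1, le_refl 1, fun _ => 1, ?_, ?_, ?_⟩
  · intro g h _ _ _
    simpa [permHammingDist] using hε
  · intro _
    simpa [permHammingDist] using hε
  · intro x y _ _ hxy
    exact absurd (Subsingleton.elim x y) hxy

/-- If a finset of `G` lies in a sofic subgroup, it admits sofic approximations. -/
theorem sofic_extend {G : Type*} [Group G] (K : Subgroup G) (hK : IsSofic K)
    (F : Finset G) (hF : ∀ g ∈ F, g ∈ K) (ε : ℝ) (hε : 0 < ε) :
    ∃ n : ℕ, 1 ≤ n ∧ ∃ θ : G → Equiv.Perm (Fin n),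
      (∀ g h : G, g ∈ F → h ∈ F → g * h ∈ F →
        permHammingDist (θ g * θ h) (θ (g * h)) < ε) ∧
      ((1 : G) ∈ F → permHammingDist (θ 1) 1 < ε) ∧
      (∀ x y : G, x ∈ F → y ∈ F → x ≠ y → 1 / 4 ≤ permHammingDist (θ x) (θ y)) := by
  classical
  set F' : Finset ↥K := F.attach.image (fun x => (⟨x.1, hF x.1 x.2⟩ : ↥K)) with hF'
  obtain ⟨n, hn, θ', h1, h2, h3⟩ := hK F' ε hε
  have hmem : ∀ (g : G) (hg : g ∈ F), (⟨g, hF g hg⟩ : ↥K) ∈ F' := by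
    intro g hg
    exact Finset.mem_image.mpr ⟨⟨g, hg⟩, Finset.mem_attach _ _, rfl⟩
  refine ⟨n, hn, fun g => if hg : g ∈ K then θ' ⟨g, hg⟩ else 1, ?_, ?_, ?_⟩
  · intro g h hg hh hgh
    dsimp only
    rw [dif_pos (hF g hg), dif_pos (hF h hh), dif_pos (hF (g*h) hgh)]
    have : (⟨g * h, hF (g*h) hgh⟩ : ↥K) = ⟨g, hF g hg⟩ * ⟨h, hF h hh⟩ := rfl
    rw [this]
    exact h1 _ _ (hmem g hg) (hmem h hh) (this ▸ hmem (g*h) hgh)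
  · intro h1F
    dsimp only
    rw [dif_pos (hF 1 h1F)]
    have : (⟨(1:G), hF 1 h1F⟩ : ↥K) = 1 := rfl
    rw [this]
    exact h2 (this ▸ hmem 1 h1F)
  · intro x y hx hy hxy
    dsimp only
    rw [dif_pos (hF x hx), dif_pos (hF y hy)]
    exact h3 _ _ (hmem x hx) (hmem y hy) (fun h => hxy (congrArg Subtype.val h))

theorem count_prod {β α : Type*} [Fintype β] [Fintype α] (P : β × α → Prop)
    [DecidablePred P] [∀ c : β, DecidablePred fun i : α => P (c, i)] :
    (Finset.univ.filter P).card = ∑ c : β, (Finset.univ.filter fun i => P (c, i)).card := by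
  rw [Finset.card_filter, Fintype.sum_prod_type]
  exact Finset.sum_congr rfl fun c _ => (Finset.card_filter _ _).symm

open scoped Classical in
theorem pdist_prod_lt {β α : Type*} [Fintype β] [Fintype α] [Nonempty β] [Nonempty α]
    (σ τ : Equiv.Perm (β × α)) (ε : ℝ)
    (h : ∀ c : β, ((Finset.univ.filter fun i : α => σ (c, i) ≠ τ (c, i)).card : ℝ)
        < ε * Fintype.card α) :
    pdist σ τ < ε := by
  unfold pdist
  have hα : 0 < (Fintype.card α : ℝ) := by exact_mod_cast Fintype.card_pos
  have hβ : 0 < (Fintype.card β : ℝ) := by exact_mod_cast Fintype.card_pos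
  rw [div_lt_iff₀ (by rw [Fintype.card_prod]; push_cast; positivity)]
  have hcp := count_prod (fun a : β × α => σ a ≠ τ a)
  rw [Finset.filter_congr_decidable] at hcp ⊢
  rw [hcp]
  push_cast
  calc (∑ c : β, ((Finset.univ.filter fun i : α => σ (c, i) ≠ τ (c, i)).card : ℝ))
      < ∑ _c : β, ε * Fintype.card α :=
        Finset.sum_lt_sum_of_nonempty Finset.univ_nonempty (fun c _ => h c)
    _ = ε * (Fintype.card (β × α)) := by
        rw [Finset.sum_const, Finset.card_univ, Fintype.card_prod]; push_cast; ring

open scoped Classical in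
theorem pdist_prod_le {β α : Type*} [Fintype β] [Fintype α] [Nonempty β] [Nonempty α]
    (σ τ : Equiv.Perm (β × α)) (r : ℝ)
    (h : ∀ c : β, r * Fintype.card α
        ≤ ((Finset.univ.filter fun i : α => σ (c, i) ≠ τ (c, i)).card : ℝ)) :
    r ≤ pdist σ τ := by
  unfold pdist
  have hα : 0 < (Fintype.card α : ℝ) := by exact_mod_cast Fintype.card_pos
  have hβ : 0 < (Fintype.card β : ℝ) := by exact_mod_cast Fintype.card_pos
  rw [le_div_iff₀ (by rw [Fintype.card_prod]; push_cast; positivity)]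
  have hcp := count_prod (fun a : β × α => σ a ≠ τ a)
  rw [Finset.filter_congr_decidable] at hcp ⊢
  rw [hcp]
  push_cast
  calc r * (Fintype.card (β × α) : ℝ)
      = ∑ _c : β, r * Fintype.card α := by
        rw [Finset.sum_const, Finset.card_univ, Fintype.card_prod]; push_cast; ring
    _ ≤ _ := Finset.sum_le_sum (fun c _ => h c)

section Cocycle

variable {G : Type*} [Group G] (K : Subgroup G)

theorem coc_mem (g : G) (c : G ⧸ K) : (g • c).out⁻¹ * (g * c.out) ∈ K := by
  rw [← QuotientGroup.eq]
  have h2 : (QuotientGroup.mk (g * c.out) : G ⧸ K) = g • c := by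
    rw [← smul_eq_mul, ← MulAction.Quotient.smul_mk, QuotientGroup.out_eq']
  rw [QuotientGroup.out_eq', h2]

/-- The cocycle associated with the coset space `G ⧸ K`. -/
noncomputable def coc (g : G) (c : G ⧸ K) : ↥K :=
  ⟨(g • c).out⁻¹ * (g * c.out), coc_mem K g c⟩

theorem coc_mul (g g' : G) (c : G ⧸ K) :
    coc K g (g' • c) * coc K g' c = coc K (g * g') c := by
  apply Subtype.ext
  show ((g • g' • c).out⁻¹ * (g * (g' • c).out)) * ((g' • c).out⁻¹ * (g' * c.out))
      = ((g * g') • c).out⁻¹ * (g * g' * c.out)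
  rw [mul_smul]
  group

theorem coc_one (c : G ⧸ K) : coc K 1 c = 1 := by
  apply Subtype.ext
  show ((1 : G) • c).out⁻¹ * (1 * c.out) = 1
  rw [one_smul, one_mul, inv_mul_cancel]

theorem coc_inj {x y : G} {c : G ⧸ K} (h1 : x • c = y • c) (h2 : coc K x c = coc K y c) :
    x = y := by
  have h3 := congrArg Subtype.val h2
  simp only [coc, h1] at h3
  have h4 : x * c.out = y * c.out := mul_left_cancel h3
  exact mul_right_cancel h4

end Cocycle

theorem card_filter_eq_of_iff {α : Type*} [Fintype α] {p q : α → Prop}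
    {hp : DecidablePred p} {hq : DecidablePred q} (h : ∀ a, p a ↔ q a) :
    (@Finset.filter _ p hp Finset.univ).card = (@Finset.filter _ q hq Finset.univ).card := by
  have hpq : p = q := funext fun a => propext (h a)
  subst hpq
  congr!

theorem le_card_filter_of_forall {α : Type*} [Fintype α] {p : α → Prop}
    {hp : DecidablePred p} (h : ∀ a, p a) :
    Fintype.card α ≤ (@Finset.filter _ p hp Finset.univ).card := by
  have : @Finset.filter _ p hp Finset.univ = Finset.univ := by
    ext a
    simp [h a]
  rw [this, Finset.card_univ]

theorem isSofic_of_finiteIndex_s10 {G : Type*} [Group G] (K : Subgroup G) (hfi : K.FiniteIndex)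
    (hK : IsSofic ↥K) : IsSofic G := by
  classical
  letI : Fintype (G ⧸ K) := @Subgroup.fintypeQuotientOfFiniteIndex G _ K hfi
  intro F ε hε
  set F' : Finset ↥K :=
    ((insert (1:G) F) ×ˢ (Finset.univ : Finset (G ⧸ K))).image (fun p => coc K p.1 p.2)
    with hF'def
  have hmemF' : ∀ (g : G), (g = 1 ∨ g ∈ F) → ∀ c : G ⧸ K, coc K g c ∈ F' := by
    intro g hg c
    refine Finset.mem_image.mpr ⟨(g, c), Finset.mem_product.mpr ⟨?_, Finset.mem_univ _⟩, rfl⟩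
    rcases hg with rfl | hg
    · exact Finset.mem_insert_self _ _
    · exact Finset.mem_insert_of_mem hg
  obtain ⟨n, hn, θ', hhom, hid, hsep⟩ := hK F' ε hε
  have hn0 : (0:ℝ) < (n:ℝ) := by exact_mod_cast hn
  haveI : NeZero n := ⟨by omega⟩
  -- the product permutations
  let A : G → Equiv.Perm ((G ⧸ K) × Fin n) := fun g =>
    Equiv.prodShear (MulAction.toPerm g) (fun c => θ' (coc K g c))
  have hA : ∀ (g : G) (c : G ⧸ K) (i : Fin n), A g (c, i) = (g • c, θ' (coc K g c) i) :=
    fun g c i => rfl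
  -- approximate homomorphism property
  have key1 : ∀ g h : G, g ∈ F → h ∈ F → g * h ∈ F →
      pdist (A g * A h) (A (g * h)) < ε := by
    intro g h hg hh hgh
    apply pdist_prod_lt
    intro c
    rw [Fintype.card_fin]
    have hm1 : coc K g (h • c) ∈ F' := hmemF' g (Or.inr hg) _
    have hm2 : coc K h c ∈ F' := hmemF' h (Or.inr hh) _
    have hm3 : coc K g (h • c) * coc K h c ∈ F' := by
      rw [coc_mul]; exact hmemF' _ (Or.inr hgh) _
    have hb := hhom _ _ hm1 hm2 hm3
    rw [coc_mul] at hb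
    unfold permHammingDist at hb
    rw [div_lt_iff₀ hn0] at hb
    refine lt_of_eq_of_lt (congrArg (Nat.cast : ℕ → ℝ)
      (card_filter_eq_of_iff fun i => ?_)) hb
    rw [Equiv.Perm.mul_apply, Equiv.Perm.mul_apply, hA, hA, hA]
    simp [Prod.ext_iff, mul_smul]
  -- identity
  have key2 : pdist (A 1) 1 < ε := by
    apply pdist_prod_lt
    intro c
    rw [Fintype.card_fin]
    have hm1 : (1 : ↥K) ∈ F' := by
      have := hmemF' 1 (Or.inl rfl) c
      rwa [coc_one] at this
    have hb := hid hm1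
    unfold permHammingDist at hb
    rw [div_lt_iff₀ hn0] at hb
    refine lt_of_eq_of_lt (congrArg (Nat.cast : ℕ → ℝ)
      (card_filter_eq_of_iff fun i => ?_)) hb
    rw [hA, coc_one]
    simp [Prod.ext_iff, one_smul]
  -- separation
  have key3 : ∀ x y : G, x ∈ F → y ∈ F → x ≠ y → 1 / 4 ≤ pdist (A x) (A y) := by
    intro x y hx hy hxy
    apply pdist_prod_le
    intro c
    rw [Fintype.card_fin]
    by_cases hc : x • c = y • c
    · -- the permutation parts must separate
      have hne : coc K x c ≠ coc K y c := fun hcc => hxy (coc_inj K hc hcc)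
      have hb := hsep _ _ (hmemF' x (Or.inr hx) c) (hmemF' y (Or.inr hy) c) hne
      unfold permHammingDist at hb
      rw [le_div_iff₀ hn0] at hb
      refine le_of_le_of_eq hb (congrArg (Nat.cast : ℕ → ℝ)
        (card_filter_eq_of_iff fun i => ?_)).symm
      rw [hA, hA]
      simp [Prod.ext_iff, hc]
    · -- the coset parts differ everywhere
      have hpred : ∀ i : Fin n, A x (c, i) ≠ A y (c, i) := by
        intro i
        rw [hA, hA]
        simp only [ne_eq, Prod.mk.injEq, not_and]
        intro h'
        exact absurd h' hc
      refine le_trans ?_ (Nat.cast_le.mpr (le_card_filter_of_forall hpred))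
      rw [Fintype.card_fin]
      nlinarith [hn0]
  -- transport to `Fin N`
  set N := Fintype.card ((G ⧸ K) × Fin n) with hN
  have hN1 : 1 ≤ N := Fintype.card_pos
  let e : ((G ⧸ K) × Fin n) ≃ Fin N := Fintype.equivFin _
  refine ⟨N, hN1, fun g => e.permCongr (A g), ?_, ?_, ?_⟩
  · intro g h hg hh hgh
    rw [← permCongr_mul, permHammingDist_permCongr]
    exact key1 g h hg hh hgh
  · intro _
    rw [show (1 : Equiv.Perm (Fin N)) = e.permCongr 1 from (permCongr_one e).symm,
      permHammingDist_permCongr]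
    exact key2
  · intro x y hx hy hxy
    rw [permHammingDist_permCongr]
    exact key3 x y hx hy hxy

/-- No minimal non-sofic group is locally graded. -/
theorem minimalNonSofic_not_locallyGraded (G : Type*) [Group G]
    (hG : IsMinimalNonSofic G) (hlg : IsLocallyGraded G) : False := by
  obtain ⟨hns, hmin⟩ := hG
  obtain ⟨F, hF⟩ := not_forall.mp hns
  obtain ⟨ε, hε'⟩ := not_forall.mp hF
  obtain ⟨hε, hbad⟩ := _root_.not_imp.mp hε'
  -- `G` is generated by `F`
  have hcl : Subgroup.closure (↑F : Set G) = ⊤ := by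
    by_contra hne
    exact hbad (sofic_extend _ (hmin _ hne) F (fun g hg => Subgroup.subset_closure hg) ε hε)
  rcases subsingleton_or_nontrivial G with hsub | hnt
  · exact hbad (isSofic_of_subsingleton G F ε hε)
  · have htop_ne : (⊤ : Subgroup G) ≠ ⊥ := by
      intro h
      obtain ⟨x, hx⟩ := exists_ne (1 : G)
      exact hx (Subgroup.mem_bot.mp (h ▸ Subgroup.mem_top x))
    have hfg : (⊤ : Subgroup G).FG :=
      (Subgroup.fg_iff _).mpr ⟨↑F, hcl, F.finite_toSet⟩
    obtain ⟨Kt, hKt_ne, hKt_fi⟩ := hlg ⊤ htop_ne hfg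
    set e := Subgroup.topEquiv (G := G) with he
    set K' : Subgroup G := Kt.map e.toMonoidHom with hK'
    have hsurj : Function.Surjective e.toMonoidHom := e.surjective
    have hinj : Function.Injective e.toMonoidHom := e.injective
    have hker : e.toMonoidHom.ker ≤ Kt := by
      rw [(MonoidHom.ker_eq_bot_iff _).mpr hinj]
      exact bot_le
    have hK'fi : K'.FiniteIndex := by
      constructor
      rw [hK', Kt.index_map_eq hsurj hker]
      exact hKt_fi.index_ne_zero
    have hK'ne : K' ≠ ⊤ := by
      intro h
      apply hKt_ne
      exact Subgroup.map_injective hinj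
        (h.trans (Subgroup.map_top_of_surjective _ hsurj).symm)
    exact hbad (isSofic_of_finiteIndex_s10 K' hK'fi (hmin K' hK'ne) F ε hε)
end

section
/- If there exists a periodic (torsion) non-sofic group with no element of order 2, then there exists a periodic non-sofic group D that is divisible, i.e., for every d in D and every natural number n ≥ 1 there exists h in D with h^n = d. -/
/-!
Embed `G` diagonally into the regular wreath product `G ≀ᵣ C_m`: the diagonal copy of `h` is
the `m`-th power of `(δ_h, c)`, where `δ_h` is `h` at the identity and `1` elsewhere and `c`
generates `C_m`. Iterating with `m = (k + 1)!` at step `k` and taking the direct limit gives a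
group containing `G` in which every element has roots of all orders. Wreath products of a
torsion group by a finite group are torsion, and so is a direct limit of torsion groups. The
limit is not sofic because its subgroup `G` is not.
-/

open scoped Nat

instance Nat.neZero_factorial (n : ℕ) : NeZero n ! := ⟨n.factorial_ne_zero⟩

theorem IsSofic.of_injective {G H : Type*} [Group G] [Group H] (f : G →* H)
    (hf : Function.Injective f) (hH : IsSofic H) : IsSofic G := by
  classical
  intro F ε hε
  obtain ⟨n, hn, θ, hmul, hone, hsep⟩ := hH (F.image f) ε hε
  have hmem {g : G} (hg : g ∈ F) : f g ∈ F.image f := Finset.mem_image_of_mem f hg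
  refine ⟨n, hn, fun g ↦ θ (f g), fun g h hg hh hgh ↦ ?_, fun h1 ↦ ?_,
    fun x y hx hy hxy ↦ hsep _ _ (hmem hx) (hmem hy) (hf.ne hxy)⟩
  · have hgh' : f g * f h ∈ F.image f := by simpa only [map_mul] using hmem hgh
    simpa only [map_mul] using hmul _ _ (hmem hg) (hmem hh) hgh'
  · simpa only [map_one] using hone (by simpa only [map_one] using hmem h1)

lemma ZMod.mem_powers_ofAdd_one (m : ℕ) [NeZero m] (x : Multiplicative (ZMod m)) :
    x ∈ Submonoid.powers (Multiplicative.ofAdd 1) := by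
  refine ⟨x.toAdd.val, ?_⟩
  show Multiplicative.ofAdd 1 ^ _ = x
  rw [← ofAdd_nsmul, nsmul_one, ZMod.natCast_zmod_val]
  rfl

namespace RegularWreathProduct

variable {D Q : Type*} [Group D] [Group Q]

def base : (Q → D) →* D ≀ᵣ Q where
  toFun a := ⟨a, 1⟩
  map_one' := rfl
  map_mul' _ _ := by ext <;> simp

def diag : D →* D ≀ᵣ Q := base.comp (Pi.constMonoidHom Q D)

lemma diag_injective [Nonempty Q] : Function.Injective (diag : D →* D ≀ᵣ Q) :=
  fun _ _ h ↦ congrFun (congrArg left h) (Classical.arbitrary Q)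

lemma isMulTorsion [Finite Q] (hD : IsMulTorsion D) : IsMulTorsion (D ≀ᵣ Q) := by
  refine IsMulTorsion.extension_closed (f := rightHom) rfl (fun q ↦ isOfFinOrder_of_finite q)
    fun ⟨g, hg⟩ ↦ Submonoid.isOfFinOrder_coe.1 ?_
  show IsOfFinOrder g
  rw [show g = base g.left from RegularWreathProduct.ext rfl hg]
  exact base.isOfFinOrder (IsOfFinOrder.pi fun x ↦ hD (g.left x))

lemma pow_mk_mulSingle_left [DecidableEq Q] (q : Q) (h : D) {k : ℕ} (hk : k ≤ orderOf q) :
    ((⟨Pi.mulSingle 1 h, q⟩ : D ≀ᵣ Q) ^ k).left =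
      fun x ↦ if x ∈ (Finset.range k).image (q ^ ·) then h else 1 := by
  induction k with
  | zero => ext x; simp
  | succ k ih =>
    ext x
    have hright : ((⟨Pi.mulSingle 1 h, q⟩ : D ≀ᵣ Q) ^ k).right = q ^ k :=
      map_pow rightHom _ k
    rw [pow_succ, mul_left, Pi.mul_apply, ih (by omega), hright]
    by_cases hx : x = q ^ k
    · subst hx
      have hnew : q ^ k ∉ (Finset.range k).image (q ^ ·) := by
        intro hmem
        obtain ⟨j, hj, hjk⟩ := Finset.mem_image.1 hmem
        rw [Finset.mem_range] at hj
        exact hj.ne (pow_injOn_Iio_orderOf (Set.mem_Iio.2 (by omega)) (Set.mem_Iio.2 hk) hjk)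
      simp [hnew, Finset.range_add_one]
    · simp [hx, Finset.range_add_one, inv_mul_eq_one, Ne.symm hx]

lemma mk_mulSingle_pow_orderOf [DecidableEq Q] [Finite Q] {q : Q}
    (hq : ∀ x, x ∈ Submonoid.powers q) (h : D) :
    (⟨Pi.mulSingle 1 h, q⟩ : D ≀ᵣ Q) ^ orderOf q = diag h := by
  ext x
  · rw [pow_mk_mulSingle_left q h le_rfl]
    exact if_pos ((isOfFinOrder_of_finite q).mem_powers_iff_mem_range_orderOf.1 (hq x))
  · exact (map_pow rightHom _ _).trans (pow_orderOf_eq_one q)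

lemma exists_pow_eq_diag {m n : ℕ} [NeZero m] (hn : n ∣ m) (h : D) :
    ∃ w : D ≀ᵣ Multiplicative (ZMod m), w ^ n = diag h := by
  have hq : orderOf (Multiplicative.ofAdd (1 : ZMod m)) = m := by
    rw [orderOf_ofAdd_eq_addOrderOf, ZMod.addOrderOf_one]
  refine ⟨⟨Pi.mulSingle 1 h, Multiplicative.ofAdd 1⟩ ^ (m / n), ?_⟩
  have hroot := mk_mulSingle_pow_orderOf (ZMod.mem_powers_ofAdd_one m) h
  rw [hq] at hroot
  rwa [← pow_mul, Nat.div_mul_cancel hn]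

end RegularWreathProduct

namespace MonoidHom

variable {S : ℕ → Type*} [∀ n, Group (S n)] (f : ∀ n, S n →* S (n + 1))

def natLERec (i j : ℕ) (h : i ≤ j) : S i →* S j :=
  Nat.leRecOn h (fun g ↦ (f _).comp g) (MonoidHom.id _)

lemma coe_natLERec (i j : ℕ) (h : i ≤ j) :
    (natLERec f i j h : S i → S j) = Nat.leRecOn h fun {k} ↦ f k := by
  induction j, h using Nat.le_induction with
  | base => ext x; simp [natLERec, Nat.leRecOn_self]
  | succ j hij ih =>
    ext x
    rw [Nat.leRecOn_succ hij, natLERec, Nat.leRecOn_succ hij, ← natLERec, coe_comp,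
      Function.comp_apply, ih]

instance natLERec.directedSystem : DirectedSystem S fun i j h ↦ natLERec f i j h where
  map_self i x := by simp [coe_natLERec, Nat.leRecOn_self]
  map_map _ _ _ hij hjk x := by simp [coe_natLERec, Nat.leRecOn_trans hij hjk]

lemma natLERec_succ {i j : ℕ} (h : i ≤ j) (x : S i) :
    natLERec f i (j + 1) (h.trans j.le_succ) x = f j (natLERec f i j h x) := by
  simp [coe_natLERec, Nat.leRecOn_succ h]

lemma natLERec_injective (hf : ∀ n, Function.Injective (f n)) (i j : ℕ) (h : i ≤ j) :
    Function.Injective (natLERec f i j h) := by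
  rw [coe_natLERec]
  exact Nat.leRecOn_injective h _ hf

end MonoidHom

namespace DirectLimit

variable {ι : Type*} [Preorder ι] [IsDirectedOrder ι] [Nonempty ι] {G : ι → Type*}
  [∀ i, Group (G i)] {f : ∀ i j, i ≤ j → G i →* G j} [DirectedSystem G (f · · ·)]

variable (f) in
def Group.of (i : ι) : G i →* DirectLimit G f where
  toFun x := ⟦⟨i, x⟩⟧
  map_one' := (one_def i).symm
  map_mul' _ _ := (mul_def ..).symm

lemma Group.of_injective (hf : ∀ i j h, Function.Injective (f i j h)) (i : ι) :
    Function.Injective (Group.of f i) :=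
  mk_injective f hf i

lemma isMulTorsion (hG : ∀ i, IsMulTorsion (G i)) : IsMulTorsion (DirectLimit G f) := by
  intro z
  obtain ⟨i, x, rfl⟩ := exists_eq_mk f z
  exact (Group.of f i).isOfFinOrder (hG i x)

lemma exists_pow_eq (hroot : ∀ (n : ℕ) (i : ι) (x : G i), 1 ≤ n →
      ∃ (j : ι) (hij : i ≤ j) (y : G j), y ^ n = f i j hij x)
    (z : DirectLimit G f) (n : ℕ) (hn : 1 ≤ n) : ∃ y, y ^ n = z := by
  obtain ⟨i, x, rfl⟩ := exists_eq_mk f z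
  obtain ⟨j, hij, y, hy⟩ := hroot n i x hn
  exact ⟨⟦⟨j, y⟩⟧, by rw [npow_def, hy]; exact (eq_of_le ⟨i, x⟩ j hij).symm⟩

end DirectLimit

section WreathTower

universe u

variable (G : Type u) [Group G]

def wreathTower : ℕ → GrpCat.{u}
  | 0 => GrpCat.of G
  | k + 1 => GrpCat.of (wreathTower k ≀ᵣ Multiplicative (ZMod (k + 1)!))

def wreathTower.diag (k : ℕ) : wreathTower G k →* wreathTower G (k + 1) :=
  RegularWreathProduct.diag

abbrev wreathTower.limit : Type u :=
  DirectLimit (wreathTower G ·) (MonoidHom.natLERec (wreathTower.diag G))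

namespace wreathTower

variable {G}

lemma isMulTorsion (hG : IsMulTorsion G) : ∀ k, IsMulTorsion (wreathTower G k)
  | 0 => hG
  | k + 1 => RegularWreathProduct.isMulTorsion (isMulTorsion hG k)

lemma exists_pow_eq_natLERec (n i : ℕ) (x : wreathTower G i) (hn : 1 ≤ n) :
    ∃ (j : ℕ) (hij : i ≤ j) (y : wreathTower G j),
      y ^ n = MonoidHom.natLERec (wreathTower.diag G) i j hij x := by
  have hdvd : n ∣ (max i n + 1)! := Nat.dvd_factorial hn (by omega)
  obtain ⟨y, hy⟩ := RegularWreathProduct.exists_pow_eq_diag hdvd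
    (MonoidHom.natLERec (wreathTower.diag G) i (max i n) (le_max_left i n) x)
  exact ⟨max i n + 1, _, y,
    hy.trans (MonoidHom.natLERec_succ (wreathTower.diag G) (le_max_left i n) x).symm⟩

lemma limit_isMulTorsion (hG : IsMulTorsion G) : IsMulTorsion (limit G) :=
  DirectLimit.isMulTorsion (isMulTorsion hG)

lemma limit_exists_pow_eq (z : limit G) (n : ℕ) (hn : 1 ≤ n) : ∃ y, y ^ n = z :=
  DirectLimit.exists_pow_eq exists_pow_eq_natLERec z n hn

lemma of_zero_injective :
    Function.Injective (DirectLimit.Group.of (MonoidHom.natLERec (wreathTower.diag G)) 0) :=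
  DirectLimit.Group.of_injective (MonoidHom.natLERec_injective _
    fun _ ↦ RegularWreathProduct.diag_injective) 0

end wreathTower

end WreathTower

/-- If there exists a periodic non-sofic group with no element of order 2, then there
exists a periodic non-sofic group that is divisible. -/
theorem exists_divisible_periodic_nonSofic
    (h : ∃ (G : Type) (_ : Group G), (∀ g : G, IsOfFinOrder g) ∧ ¬ IsSofic G ∧
      ∀ g : G, orderOf g ≠ 2) :
    ∃ (D : Type) (_ : Group D), (∀ d : D, IsOfFinOrder d) ∧ ¬ IsSofic D ∧
      ∀ (d : D) (n : ℕ), 1 ≤ n → ∃ x : D, x ^ n = d := by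
  obtain ⟨G, _, hG, hG_nonSofic, -⟩ := h
  exact ⟨wreathTower.limit G, inferInstance, wreathTower.limit_isMulTorsion hG,
    fun hD ↦ hG_nonSofic (hD.of_injective _ wreathTower.of_zero_injective),
    wreathTower.limit_exists_pow_eq⟩
end
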